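/- The pair β_n = q^n/(q²;q)_{2n}, with α_{3m-1} = q^{6m²-4m}, α_{3m} = q^{6m²+4m}, α_{3m+1} = -q^{6m²+8m+2} - q^{6m²+4m}, is a Bailey pair relative to a = q; that is, β_n = ∑_{r=0}^n α_r/((q;q)_{n-r}(q²;q)_{n+r}) for all n ≥ 0. -/

import Mathlib

open Finset

noncomputable def qPoch (a q : ℂ) (n : ℕ) : ℂ := ∏ i ∈ Finset.range n, (1 - a * q ^ i)

noncomputable def qInf (q : ℂ) : ℂ := ∏' i : ℕ, (1 - q ^ (i + 1))

def zsgn (m : ℤ) : ℤ := if 0 ≤ m then 1 else -1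

noncomputable def alphaS4 (q : ℂ) (n : ℕ) : ℂ :=
  if n % 3 = 0 then q ^ (6 * ((n : ℤ) / 3) ^ 2 + 4 * ((n : ℤ) / 3) : ℤ)
  else if n % 3 = 1 then -q ^ (6 * ((n : ℤ) / 3) ^ 2 + 8 * ((n : ℤ) / 3) + 2 : ℤ) - q ^ (6 * ((n : ℤ) / 3) ^ 2 + 4 * ((n : ℤ) / 3) : ℤ)
  else q ^ (6 * (((n : ℤ) + 1) / 3) ^ 2 - 4 * (((n : ℤ) + 1) / 3) : ℤ)

/-!
Write `β_n = q^n/(q²;q)_{2n}` and `S_n` for the Bailey sum on the right.  Both satisfy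
`(1 - q^{2n+2})(1 - q^{2n+3}) X_{n+1} = q X_n` with `β_0 = S_0 = 1`.  For `β` this is immediate; for
`S` it is a telescoping argument in blocks of three consecutive terms, matching the period of `α`:
the first `3m` terms of `S_{n+1}` and `S_n` violate the recurrence by an explicit defect
`baileyDefect q m (n - 3m)`, and the at most four remaining terms cancel that defect exactly.
-/

variable {q : ℂ}

lemma qPoch_zero (a : ℂ) : qPoch a q 0 = 1 := prod_range_zero _

lemma qPoch_self_succ (n : ℕ) : qPoch q q (n + 1) = qPoch q q n * (1 - q ^ (n + 1)) := by
  rw [qPoch, prod_range_succ, ← pow_succ']; rfl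

lemma qPoch_sq_succ (n : ℕ) :
    qPoch (q ^ 2) q (n + 1) = qPoch (q ^ 2) q n * (1 - q ^ (n + 2)) := by
  rw [qPoch, prod_range_succ, ← pow_add, add_comm 2]; rfl

lemma one_sub_pow_ne_zero (hq : ‖q‖ < 1) {k : ℕ} (hk : k ≠ 0) : 1 - q ^ k ≠ 0 := by
  rw [sub_ne_zero, ne_comm]
  refine fun h => (pow_lt_one₀ (norm_nonneg q) hq hk).ne ?_
  rw [← norm_pow, h, norm_one]

lemma one_sub_ne_zero (hq : ‖q‖ < 1) : 1 - q ≠ 0 := by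
  simpa using one_sub_pow_ne_zero hq one_ne_zero

lemma qPoch_self_ne_zero (hq : ‖q‖ < 1) (n : ℕ) : qPoch q q n ≠ 0 := by
  induction n with
  | zero => simp [qPoch_zero]
  | succ n ih => rw [qPoch_self_succ]; exact mul_ne_zero ih (one_sub_pow_ne_zero hq n.succ_ne_zero)

lemma qPoch_sq_ne_zero (hq : ‖q‖ < 1) (n : ℕ) : qPoch (q ^ 2) q n ≠ 0 := by
  induction n with
  | zero => simp [qPoch_zero]
  | succ n ih => rw [qPoch_sq_succ]; exact mul_ne_zero ih (one_sub_pow_ne_zero hq (n + 1).succ_ne_zero)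

lemma alphaS4_three_mul (m : ℕ) : alphaS4 q (3 * m) = q ^ (6 * m ^ 2 + 4 * m) := by
  rw [alphaS4, if_pos (by omega), show ((3 * m : ℕ) : ℤ) / 3 = m by omega]
  exact_mod_cast zpow_natCast q _

lemma alphaS4_three_mul_add_one (m : ℕ) :
    alphaS4 q (3 * m + 1) = -q ^ (6 * m ^ 2 + 8 * m + 2) - q ^ (6 * m ^ 2 + 4 * m) := by
  rw [alphaS4, if_neg (by omega), if_pos (by omega), show ((3 * m + 1 : ℕ) : ℤ) / 3 = m by omega]
  norm_cast

lemma alphaS4_three_mul_add_two (m : ℕ) :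
    alphaS4 q (3 * m + 2) = q ^ (6 * m ^ 2 + 8 * m + 2) := by
  rw [alphaS4, if_neg (by omega), if_neg (by omega),
    show ((3 * m + 2 : ℕ) : ℤ) + 1 = 3 * (m + 1) by push_cast; ring,
    Int.mul_ediv_cancel_left _ three_ne_zero,
    show 6 * ((m : ℤ) + 1) ^ 2 - 4 * (m + 1) = ((6 * m ^ 2 + 8 * m + 2 : ℕ) : ℤ) by push_cast; ring]
  exact zpow_natCast q _

lemma alphaS4_three_mul_add_three (m : ℕ) :
    alphaS4 q (3 * m + 3) = q ^ (6 * (m + 1) ^ 2 + 4 * (m + 1)) :=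
  alphaS4_three_mul (m + 1)

lemma beta_recurrence (hq : ‖q‖ < 1) (n : ℕ) :
    (1 - q ^ (2 * n + 2)) * (1 - q ^ (2 * n + 3)) * (q ^ (n + 1) / qPoch (q ^ 2) q (2 * (n + 1)))
      = q * (q ^ n / qPoch (q ^ 2) q (2 * n)) := by
  rw [show 2 * (n + 1) = 2 * n + 1 + 1 by ring, qPoch_sq_succ, qPoch_sq_succ]
  field_simp [qPoch_sq_ne_zero hq, one_sub_pow_ne_zero hq]
  ring

noncomputable def baileySum (q : ℂ) (n K : ℕ) : ℂ :=
  ∑ r ∈ range K, alphaS4 q r / (qPoch q q (n - r) * qPoch (q ^ 2) q (n + r))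

noncomputable def baileyDefect (q : ℂ) (m d : ℕ) : ℂ :=
  q ^ (6 * m ^ 2 + 4 * m + 2 * d + 2) * (q ^ (4 * m) - 1 - q ^ (4 * m + d + 1) + q ^ (6 * m + d + 1)) /
    (qPoch q q (d + 1) * qPoch (q ^ 2) q (6 * m + d))

lemma baileySum_add (n K k : ℕ) :
    baileySum q n (K + k) = baileySum q n K +
      ∑ i ∈ range k, alphaS4 q (K + i) / (qPoch q q (n - (K + i)) * qPoch (q ^ 2) q (n + (K + i))) :=
  sum_range_add _ _ _

lemma baileySum_three_mul (hq : ‖q‖ < 1) (m d : ℕ) :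
    (1 - q ^ (2 * (3 * m + d) + 2)) * (1 - q ^ (2 * (3 * m + d) + 3)) *
        baileySum q (3 * m + (d + 1)) (3 * m)
      = q * baileySum q (3 * m + d) (3 * m) + baileyDefect q m d := by
  induction m generalizing d with
  | zero => simp [baileySum, baileyDefect]
  | succ m ih =>
    rw [show 3 * (m + 1) + d = 3 * m + (d + 3) by ring,
      show 3 * (m + 1) + (d + 1) = 3 * m + (d + 3 + 1) by ring, show 3 * (m + 1) = 3 * m + 3 by ring,
      baileySum_add, baileySum_add, mul_add, ih]
    generalize baileySum q _ _ = S
    -- Bring every index to the form `base + numeral`, so that `qPoch_self_succ` and `qPoch_sq_succ`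
    -- peel all Pochhammer symbols down to `qPoch q q d` and `qPoch (q ^ 2) q (6 * m + d)`.
    simp only [sum_range_succ, sum_range_zero, zero_add, add_zero, baileyDefect,
      show 6 * (m + 1) + d = 6 * m + (d + 6) by ring,
      show ∀ e k, 3 * m + e + (3 * m + k) = 6 * m + (e + k) from fun _ _ => by ring,
      Nat.add_sub_add_left]
    simp only [Nat.reduceSubDiff, ← add_assoc, alphaS4_three_mul, alphaS4_three_mul_add_one,
      alphaS4_three_mul_add_two, qPoch_self_succ, qPoch_sq_succ]
    field_simp [qPoch_self_ne_zero hq, qPoch_sq_ne_zero hq, one_sub_pow_ne_zero hq]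
    ring

lemma baileySum_recurrence (hq : ‖q‖ < 1) (n : ℕ) :
    (1 - q ^ (2 * n + 2)) * (1 - q ^ (2 * n + 3)) * baileySum q (n + 1) (n + 2)
      = q * baileySum q n (n + 1) := by
  obtain ⟨m, d, hd, rfl⟩ : ∃ m d, d < 3 ∧ n = 3 * m + d :=
    ⟨n / 3, n % 3, n.mod_lt three_pos, (n.div_add_mod 3).symm⟩
  have hblock := baileySum_three_mul hq m d
  rw [add_assoc (3 * m) d 1, add_assoc (3 * m) d 2]
  unfold baileySum at hblock ⊢
  obtain rfl | rfl | rfl : d = 0 ∨ d = 1 ∨ d = 2 := by omega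
  all_goals
    simp only [Nat.reduceAdd, zero_add, add_zero] at hblock ⊢
    simp only [baileyDefect, sum_range_succ, add_zero, Nat.sub_self,
      show ∀ e k, 3 * m + e + (3 * m + k) = 6 * m + (e + k) from fun _ _ => by ring,
      show ∀ e, 3 * m + e + 3 * m = 6 * m + e from fun _ => by ring,
      show 3 * m + 3 * m = 6 * m by ring, Nat.add_sub_add_left, Nat.add_sub_cancel_left] at hblock ⊢
    simp only [alphaS4_three_mul, alphaS4_three_mul_add_one, alphaS4_three_mul_add_two,
      alphaS4_three_mul_add_three, qPoch_self_succ, qPoch_sq_succ, qPoch_zero] at hblock ⊢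
    linear_combination (norm := skip) hblock
    field_simp [qPoch_sq_ne_zero hq, one_sub_pow_ne_zero hq, one_sub_ne_zero hq]
    ring

theorem stmt4 (q : ℂ) (hq : ‖q‖ < 1) (n : ℕ) :
    q ^ n / qPoch (q ^ 2) q (2 * n)
      = ∑ r ∈ Finset.range (n + 1), alphaS4 q r / (qPoch q q (n - r) * qPoch (q ^ 2) q (n + r)) := by
  change _ = baileySum q n (n + 1)
  induction n with
  | zero => simp [baileySum, qPoch_zero, alphaS4]
  | succ n ih =>
    have hA : (1 - q ^ (2 * n + 2)) * (1 - q ^ (2 * n + 3)) ≠ 0 :=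
      mul_ne_zero (one_sub_pow_ne_zero hq (by omega)) (one_sub_pow_ne_zero hq (by omega))
    apply mul_left_cancel₀ hA
    rw [beta_recurrence hq n, ih, ← baileySum_recurrence hq n]
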